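/- arXiv:2209.14428 — 6 statements merged into one kernel-verified Lean document; each statement's English description precedes it below -/
import Mathlib

section
/- For nonnegative integers j and k, ∫_{-∞}^0 x^{j+k} / (2 sinh(π√(-x))) dx = η(-1-2j-2k), where η is the Dirichlet eta function. Consequently, for polynomials P₁, P₂ with complex coefficients, the pairing ⟨P₁, P₂⟩ defined by replacing each monomial product x^j · x^k with η(-1-2j-2k) equals ∫_{-∞}^0 P₁(x)·conj(P₂(x)) / (2 sinh(π√(-x))) dx. -/
open MeasureTheory

/-- The Dirichlet eta function. -/
noncomputable def eta (s : ℂ) : ℂ := (1 - 2 ^ (1 - s)) * riemannZeta s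

/-- The inner product on `ℂ[x]` defined by `⟨x^j, x^k⟩ = η(-1-2j-2k)`,
extended sesquilinearly. -/
noncomputable def innerP (P₁ P₂ : Polynomial ℂ) : ℂ :=
  ∑ j ∈ Finset.range (P₁.natDegree + 1), ∑ k ∈ Finset.range (P₂.natDegree + 1),
    P₁.coeff j * (starRingEnd ℂ) (P₂.coeff k) * eta (-1 - 2 * (j : ℂ) - 2 * (k : ℂ))

/-!
Substituting `x = -t²` turns `∫ x^n / (2 sinh(π√(-x)))` into `(-1)^n` times the Mellin transform
of `1 / sinh(πt)` at `s = 2n + 2`. Expanding `1 / sinh(πt) = 2 ∑ e^{-(2i+1)πt}` evaluates that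
transform as `2 π^{-s} Γ(s) (1 - 2^{-s}) ζ(s)` for `Re s > 1`, and the functional equation of `ζ`
identifies this with `-η(1 - s) / cos(πs/2)`.
-/

open Real Set Filter Asymptotics Topology

noncomputable def cschPi (t : ℝ) : ℂ := ((Real.sinh (π * t))⁻¹ : ℝ)

lemma hasSum_cschPi {t : ℝ} (ht : 0 < t) :
    HasSum (fun i : ℕ => (2 : ℂ) * rexp (-π * (2 * i + 1) * t)) (cschPi t) := by
  set u := rexp (-(π * t)) with hu_def
  have hu : 0 < u := exp_pos _
  have hu1 : u < 1 := exp_lt_one_iff.mpr (neg_neg_of_pos (by positivity))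
  have hu2 : u ^ 2 < 1 := by nlinarith
  have hsinh : (Real.sinh (π * t))⁻¹ = 2 * u * (1 - u ^ 2)⁻¹ := by
    rw [Real.sinh_eq, ← inv_inv (rexp (π * t)), ← Real.exp_neg]
    field_simp
    ring
  have hgeom := (hasSum_geometric_of_lt_one (sq_nonneg u) hu2).mul_left (2 * u)
  have hreal : HasSum (fun i : ℕ => 2 * rexp (-π * (2 * i + 1) * t)) (Real.sinh (π * t))⁻¹ := by
    refine hsinh ▸ hgeom.congr_fun fun i => ?_
    rw [← pow_mul, ← Real.exp_nat_mul, hu_def, mul_assoc 2 (rexp _), ← Real.exp_add]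
    congr 2
    push_cast
    ring
  rw [cschPi]
  convert Complex.hasSum_ofReal.mpr hreal using 1
  funext i
  push_cast
  ring

lemma tsum_one_div_two_mul_add_one_cpow {s : ℂ} (hs : 1 < s.re) :
    ∑' i : ℕ, 1 / (2 * (i : ℂ) + 1) ^ s = (1 - 2 ^ (-s)) * riemannZeta s := by
  have hsum : Summable fun k : ℕ => 1 / (k : ℂ) ^ s := Complex.summable_one_div_nat_cpow.mpr hs
  have heven (k : ℕ) : 1 / ((2 * k : ℕ) : ℂ) ^ s = 2 ^ (-s) * (1 / (k : ℂ) ^ s) := by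
    rw [Nat.cast_mul, Complex.natCast_mul_natCast_cpow, Complex.cpow_neg]
    push_cast
    field_simp
  have hodd : Summable fun k : ℕ => 1 / ((2 * k + 1 : ℕ) : ℂ) ^ s :=
    hsum.comp_injective fun a b h => by omega
  have h := tsum_even_add_odd (f := fun k : ℕ => 1 / (k : ℂ) ^ s)
    (by simpa only [heven] using hsum.mul_left (2 ^ (-s))) hodd
  simp only [heven, tsum_mul_left, ← zeta_eq_tsum_one_div_nat_cpow hs] at h
  push_cast at h
  linear_combination h

lemma mellin_cschPi {s : ℂ} (hs : 1 < s.re) :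
    mellin cschPi s = 2 * π ^ (-s) * Complex.Gamma s * (1 - 2 ^ (-s)) * riemannZeta s := by
  have hsum : Summable fun i : ℕ => ‖(2 : ℂ)‖ / (2 * (i : ℝ) + 1) ^ s.re := by
    have h := (Real.summable_one_div_nat_rpow.mpr hs).comp_injective
      (fun a b h => by simp only at h; omega : Function.Injective fun i : ℕ => 2 * i + 1)
    refine (h.mul_left 2).congr fun i => ?_
    simp [div_eq_mul_inv]
  have h := hasSum_mellin_pi_mul (a := fun _ => 2) (q := fun i : ℕ => 2 * (i : ℝ) + 1)
    (fun i => Or.inr (by positivity)) (by linarith) (fun t ht => hasSum_cschPi ht) hsum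
  have hterm (i : ℕ) : (π : ℂ) ^ (-s) * Complex.Gamma s * 2 / ((2 * (i : ℝ) + 1 : ℝ) : ℂ) ^ s
      = 2 * π ^ (-s) * Complex.Gamma s * (1 / (2 * (i : ℂ) + 1) ^ s) := by
    push_cast
    ring
  rw [← h.tsum_eq, tsum_congr hterm, tsum_mul_left, tsum_one_div_two_mul_add_one_cpow hs]
  ring

lemma eta_one_sub {s : ℂ} (hs : 1 < s.re) :
    eta (1 - s) = -Complex.cos (π * s / 2) * mellin cschPi s := by
  have hs0 : ∀ n : ℕ, s ≠ -n := by
    rintro n rfl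
    simp only [Complex.neg_re, Complex.natCast_re] at hs
    linarith [n.cast_nonneg (α := ℝ)]
  have hs1 : s ≠ 1 := by rintro rfl; simp at hs
  have h2 : (2 : ℂ) ^ s ≠ 0 := by simp
  rw [eta, riemannZeta_one_sub hs0 hs1, mellin_cschPi hs, sub_sub_cancel,
    show (2 * π : ℂ) = ((2 : ℝ) : ℂ) * π by push_cast; rfl,
    Complex.mul_cpow_ofReal_nonneg zero_le_two pi_pos.le]
  push_cast
  rw [Complex.cpow_neg 2]
  field_simp
  ring

lemma continuousOn_cschPi : ContinuousOn cschPi (Ioi 0) :=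
  Complex.continuous_ofReal.comp_continuousOn <| ContinuousOn.inv₀ (by fun_prop) fun t ht =>
    (Real.sinh_pos_iff.mpr (mul_pos pi_pos ht)).ne'

lemma cschPi_isBigO_atTop : cschPi =O[atTop] fun t => rexp (-π * t) := by
  refine IsBigO.of_bound 4 ?_
  filter_upwards [eventually_ge_atTop 1] with t ht
  have hx : 1 ≤ π * t := by nlinarith [pi_gt_three]
  have hexp : 2 ≤ rexp (π * t) := by linarith [add_one_le_exp (π * t)]
  have hexp_neg : rexp (-(π * t)) ≤ 1 := exp_le_one_iff.mpr (by linarith)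
  have hsinh : rexp (π * t) / 4 ≤ Real.sinh (π * t) := by rw [Real.sinh_eq]; linarith
  rw [cschPi, Complex.norm_real, Real.norm_of_nonneg (by positivity), neg_mul, Real.exp_neg,
    Real.norm_of_nonneg (by positivity)]
  calc (Real.sinh (π * t))⁻¹ ≤ (rexp (π * t) / 4)⁻¹ := inv_anti₀ (by positivity) hsinh
    _ = 4 * (rexp (π * t))⁻¹ := by rw [inv_div, div_eq_mul_inv]

lemma cschPi_isBigO_nhdsGT_zero : cschPi =O[𝓝[>] 0] (· ^ (-1 : ℝ)) := by
  refine IsBigO.of_bound π⁻¹ ?_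
  filter_upwards [self_mem_nhdsWithin] with t (ht : 0 < t)
  have hsinh : π * t ≤ Real.sinh (π * t) := Real.self_le_sinh_iff.mpr (by positivity)
  rw [cschPi, Complex.norm_real, Real.norm_of_nonneg (by positivity), Real.rpow_neg_one,
    Real.norm_of_nonneg (by positivity), ← mul_inv]
  exact inv_anti₀ (by positivity) hsinh

lemma mellinConvergent_cschPi {s : ℂ} (hs : 1 < s.re) : MellinConvergent cschPi s :=
  mellinConvergent_of_isBigO_rpow_exp pi_pos (continuousOn_cschPi.locallyIntegrableOn
    measurableSet_Ioi) cschPi_isBigO_atTop cschPi_isBigO_nhdsGT_zero hs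

section NegSq

variable {E : Type*} [NormedAddCommGroup E] [NormedSpace ℝ E]

lemma image_neg_sq_Ioi : (fun t : ℝ => -t ^ 2) '' Ioi 0 = Iio 0 := by
  ext x
  constructor
  · rintro ⟨t, ht : 0 < t, rfl⟩
    exact neg_neg_of_pos (pow_pos ht 2)
  · intro (hx : x < 0)
    exact ⟨√(-x), Real.sqrt_pos.mpr (neg_pos.mpr hx), by simp [Real.sq_sqrt (neg_nonneg.mpr hx.le)]⟩

lemma hasDerivWithinAt_neg_sq (t : ℝ) :
    HasDerivWithinAt (fun t : ℝ => -t ^ 2) (-(2 * t)) (Ioi 0) t := by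
  simpa using (hasDerivAt_pow 2 t).fun_neg.hasDerivWithinAt

lemma injOn_neg_sq_Ioi : InjOn (fun t : ℝ => -t ^ 2) (Ioi 0) := fun _ ha _ hb h =>
  (pow_left_inj₀ (le_of_lt ha) (le_of_lt hb) two_ne_zero).mp (neg_inj.mp h)

lemma abs_neg_two_mul_smul_eqOn (g : ℝ → E) :
    EqOn (fun t => |-(2 * t)| • g (-t ^ 2)) (fun t => (2 * t) • g (-t ^ 2)) (Ioi 0) :=
  fun t (ht : 0 < t) => by simp only [abs_neg, abs_of_pos (by positivity : 0 < 2 * t)]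

lemma integrableOn_Iio_iff_comp_neg_sq (g : ℝ → E) :
    IntegrableOn g (Iio 0) ↔ IntegrableOn (fun t => (2 * t) • g (-t ^ 2)) (Ioi 0) := by
  rw [← image_neg_sq_Ioi, integrableOn_image_iff_integrableOn_abs_deriv_smul measurableSet_Ioi
    (fun t _ => hasDerivWithinAt_neg_sq t) injOn_neg_sq_Ioi,
    integrableOn_congr_fun (abs_neg_two_mul_smul_eqOn g) measurableSet_Ioi]

lemma integral_Iio_eq_integral_comp_neg_sq (g : ℝ → E) :
    ∫ x in Iio (0 : ℝ), g x = ∫ t in Ioi 0, (2 * t) • g (-t ^ 2) := by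
  rw [← image_neg_sq_Ioi, integral_image_eq_integral_abs_deriv_smul measurableSet_Ioi
    (fun t _ => hasDerivWithinAt_neg_sq t) injOn_neg_sq_Ioi,
    setIntegral_congr_fun measurableSet_Ioi (abs_neg_two_mul_smul_eqOn g)]

end NegSq

lemma two_mul_smul_pow_div_two_sinh_neg_sq (n : ℕ) :
    EqOn (fun t : ℝ => (2 * t) • (((-t ^ 2 : ℝ) : ℂ) ^ n / (2 * Real.sinh (π * √(-(-t ^ 2))))))
      (fun t => (-1) ^ n * ((t : ℂ) ^ ((2 * n + 2 : ℂ) - 1) • cschPi t)) (Ioi 0) := by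
  intro t (ht : 0 < t)
  have hsinh : Complex.sinh (π * t) ≠ 0 := by
    exact_mod_cast (Real.sinh_pos_iff.mpr (by positivity)).ne'
  simp only [neg_neg, Real.sqrt_sq ht.le, cschPi, Complex.real_smul, smul_eq_mul]
  rw [show (2 * n + 2 : ℂ) - 1 = ((2 * n + 1 : ℕ) : ℂ) by push_cast; ring, Complex.cpow_natCast]
  push_cast
  rw [neg_pow, ← pow_mul]
  field_simp
  ring

lemma integrableOn_pow_div_two_sinh (n : ℕ) :
    IntegrableOn (fun x : ℝ => (x : ℂ) ^ n / (2 * Real.sinh (π * √(-x)))) (Iio 0) := by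
  rw [integrableOn_Iio_iff_comp_neg_sq,
    integrableOn_congr_fun (two_mul_smul_pow_div_two_sinh_neg_sq n) measurableSet_Ioi]
  have hs : 1 < (2 * n + 2 : ℂ).re := by
    simpa using (by linarith [n.cast_nonneg (α := ℝ)] : (1 : ℝ) < 2 * n + 2)
  exact (mellinConvergent_cschPi hs).const_mul _

lemma integral_pow_div_two_sinh (n : ℕ) :
    ∫ x in Iio (0 : ℝ), (x : ℂ) ^ n / (2 * Real.sinh (π * √(-x))) =
      (-1) ^ n * mellin cschPi (2 * n + 2) := by
  rw [integral_Iio_eq_integral_comp_neg_sq,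
    setIntegral_congr_fun measurableSet_Ioi (two_mul_smul_pow_div_two_sinh_neg_sq n),
    integral_const_mul, mellin]

lemma integral_pow_div_two_sinh_eq_eta (n : ℕ) :
    ∫ x in Iio (0 : ℝ), (x : ℂ) ^ n / (2 * Real.sinh (π * √(-x))) = eta (-1 - 2 * n) := by
  have hcos : Complex.cos (π * (2 * n + 2) / 2) = (-1) ^ (n + 1) := by
    rw [show (π * (2 * n + 2) / 2 : ℂ) = (((n + 1 : ℕ) * π : ℝ) : ℂ) by push_cast; ring,
      ← Complex.ofReal_cos, Real.cos_nat_mul_pi]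
    push_cast
    rfl
  have hs : 1 < (2 * n + 2 : ℂ).re := by
    simpa using (by linarith [n.cast_nonneg (α := ℝ)] : (1 : ℝ) < 2 * n + 2)
  rw [integral_pow_div_two_sinh, show (-1 - 2 * n : ℂ) = 1 - (2 * n + 2) by ring,
    eta_one_sub hs, hcos]
  ring

lemma innerP_eq_integral (P₁ P₂ : Polynomial ℂ) :
    innerP P₁ P₂ = ∫ x in Iio (0 : ℝ),
      P₁.eval (x : ℂ) * (starRingEnd ℂ) (P₂.eval (x : ℂ)) / (2 * Real.sinh (π * √(-x))) := by
  set w : ℝ → ℂ := fun x => 2 * Real.sinh (π * √(-x))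
  have hexpand (x : ℝ) : P₁.eval (x : ℂ) * (starRingEnd ℂ) (P₂.eval (x : ℂ)) / w x =
      ∑ j ∈ Finset.range (P₁.natDegree + 1), ∑ k ∈ Finset.range (P₂.natDegree + 1),
        P₁.coeff j * (starRingEnd ℂ) (P₂.coeff k) * ((x : ℂ) ^ (j + k) / w x) := by
    simp only [Polynomial.eval_eq_sum_range, map_sum, map_mul, map_pow, Complex.conj_ofReal,
      Finset.sum_mul_sum, Finset.sum_div, pow_add]
    refine Finset.sum_congr rfl fun j _ => Finset.sum_congr rfl fun k _ => ?_
    ring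
  have hint (j k : ℕ) : IntegrableOn (fun x : ℝ => (x : ℂ) ^ (j + k) / w x) (Iio 0) :=
    integrableOn_pow_div_two_sinh (j + k)
  rw [innerP]
  change _ = ∫ x in Iio (0 : ℝ), P₁.eval (x : ℂ) * (starRingEnd ℂ) (P₂.eval (x : ℂ)) / w x
  simp only [hexpand]
  rw [integral_finsetSum _ fun j _ => integrable_finsetSum _ fun k _ => (hint j k).const_mul _]
  refine Finset.sum_congr rfl fun j _ => ?_
  rw [integral_finsetSum _ fun k _ => (hint j k).const_mul _]
  refine Finset.sum_congr rfl fun k _ => ?_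
  rw [integral_const_mul, integral_pow_div_two_sinh_eq_eta]
  congr 2
  push_cast
  ring

theorem stmt1 :
    (∀ j k : ℕ,
      (∫ x in Set.Iio (0 : ℝ), (x : ℂ) ^ (j + k) / (2 * Real.sinh (Real.pi * Real.sqrt (-x)))) =
        eta (-1 - 2 * (j : ℂ) - 2 * (k : ℂ))) ∧
    (∀ P₁ P₂ : Polynomial ℂ,
      innerP P₁ P₂ =
        ∫ x in Set.Iio (0 : ℝ),
          P₁.eval (x : ℂ) * (starRingEnd ℂ) (P₂.eval (x : ℂ)) /
            (2 * Real.sinh (Real.pi * Real.sqrt (-x)))) := by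
  refine ⟨fun j k => ?_, innerP_eq_integral⟩
  rw [integral_pow_div_two_sinh_eq_eta]
  congr 1
  push_cast
  ring
end

section
/- As an identity of formal power series in t₁ and conj(t₂): with the inner product on ℂ[x] defined by ⟨x^j, x^k⟩ = η(-1-2j-2k), one has ⟨cosh(√x · t₁), cosh(√x · t₂)⟩ = (1 + cosh(t₁)·cosh(conj(t₂))) / (2(cosh(t₁) + cosh(conj(t₂)))²). -/
/-- The formal power series `cosh` of variable `i` in two variables (the other
variable being `j`): `cosh(t_i) = ∑ t_i^{2n}/(2n)!`. -/
noncomputable def coshPS (i j : Fin 2) : MvPowerSeries (Fin 2) ℂ :=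
  fun d => if d j = 0 ∧ Even (d i) then ((Nat.factorial (d i) : ℂ))⁻¹ else 0

/-!
Put `h(t) = ∑ η(-n) tⁿ/n!` and `g = h'`, so `g(t) = ∑ η(-1-n) tⁿ/n!`. Since
`ζ(-n) = -B'ₙ₊₁/(n+1)`, one gets `t·h(t) = B'(2t) - B'(t)` for the Bernoulli series
`B'(t) = t eᵗ/(eᵗ - 1)`, hence `h = eᵗ/(eᵗ + 1)` and `g = 1/(eᵗ + 2 + e⁻ᵗ)`.

The series on the left is the part of `g(t₁ + t₂)` that is even in both variables, i.e.
`(g(t₁ + t₂) + g(t₁ - t₂))/2`; as `f ↦ f(α t₁ + β t₂)` is a ring homomorphism, the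
one-variable identity transfers. With `x = e^{t₁}`, `y = e^{t₂}` the two denominators
`U = xy + 2 + 1/(xy)` and `V = x/y + 2 + y/x` satisfy `UV = (2 cosh t₁ + 2 cosh t₂)²` and
`U + V = 4 + 4 cosh t₁ cosh t₂`, which gives `(1/U + 1/V)/2 = (U + V)/(2UV)`.
-/

open PowerSeries
open scoped Nat

theorem eq_single_zero_add_single_one_iff {d : Fin 2 →₀ ℕ} {a b : ℕ} :
    d = Finsupp.single 0 a + Finsupp.single 1 b ↔ d 0 = a ∧ d 1 = b := by
  constructor
  · rintro rfl; simp
  · rintro ⟨ha, hb⟩; ext i; fin_cases i <;> simp [ha, hb]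

section LinearSubst

variable {R : Type*} [CommRing R]

noncomputable def linearForm (α β : R) : MvPowerSeries (Fin 2) R :=
  MvPowerSeries.C α * MvPowerSeries.X 0 + MvPowerSeries.C β * MvPowerSeries.X 1

theorem coeff_linearForm_pow (α β : R) (n : ℕ) (d : Fin 2 →₀ ℕ) :
    MvPowerSeries.coeff d (linearForm α β ^ n) =
      if d 0 + d 1 = n then α ^ d 0 * β ^ d 1 * (n.choose (d 0)) else 0 := by
  have hterm : ∀ m, (MvPowerSeries.C α * MvPowerSeries.X 0) ^ m *
      (MvPowerSeries.C β * MvPowerSeries.X 1) ^ (n - m) * (n.choose m : MvPowerSeries (Fin 2) R) =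
      MvPowerSeries.C (α ^ m * β ^ (n - m) * n.choose m) *
        MvPowerSeries.monomial (Finsupp.single 0 m + Finsupp.single 1 (n - m)) 1 := by
    intro m
    rw [← one_mul (1 : R), ← MvPowerSeries.monomial_mul_monomial, ← MvPowerSeries.X_pow_eq,
      ← MvPowerSeries.X_pow_eq, map_mul, map_mul, map_pow, map_pow, map_natCast]
    ring
  rw [linearForm, add_pow, map_sum]
  simp only [hterm, MvPowerSeries.coeff_C_mul, MvPowerSeries.coeff_monomial,
    eq_single_zero_add_single_one_iff, mul_ite, mul_one, mul_zero]
  split_ifs with hd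
  · rw [Finset.sum_eq_single (d 0)]
    · simp [← hd]
    · intro m _ hm; simp [Ne.symm hm]
    · intro h; simp at h; omega
  · refine Finset.sum_eq_zero fun m hm => if_neg ?_
    simp at hm; omega

theorem hasSubst_linearForm (α β : R) : HasSubst (linearForm α β) :=
  HasSubst.of_constantCoeff_zero (by simp [linearForm])

noncomputable def linearSubst (α β : R) : R⟦X⟧ →ₐ[R] MvPowerSeries (Fin 2) R :=
  substAlgHom (hasSubst_linearForm α β)

theorem coeff_linearSubst (α β : R) (f : R⟦X⟧) (d : Fin 2 →₀ ℕ) :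
    MvPowerSeries.coeff d (linearSubst α β f) =
      α ^ d 0 * β ^ d 1 * (d 0 + d 1).choose (d 0) * coeff (d 0 + d 1) f := by
  rw [linearSubst, coe_substAlgHom, coeff_subst (hasSubst_linearForm α β),
    finsum_eq_single _ (d 0 + d 1)]
  · rw [coeff_linearForm_pow, if_pos rfl, smul_eq_mul, mul_comm]
  · intro n hn
    rw [coeff_linearForm_pow, if_neg (Ne.symm hn), smul_zero]

theorem linearSubst_rescale (α β c : R) (f : R⟦X⟧) :
    linearSubst α β (rescale c f) = linearSubst (c * α) (c * β) f := by
  ext d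
  rw [coeff_linearSubst, coeff_linearSubst, coeff_rescale, mul_pow, mul_pow, pow_add]
  ring

theorem coeff_linearSubst_mul_linearSubst (α β : R) (f g : R⟦X⟧) (d : Fin 2 →₀ ℕ) :
    MvPowerSeries.coeff d (linearSubst α 0 f * linearSubst 0 β g) =
      α ^ d 0 * β ^ d 1 * coeff (d 0) f * coeff (d 1) g := by
  rw [MvPowerSeries.coeff_mul,
    Finset.sum_eq_single (Finsupp.single 0 (d 0), Finsupp.single 1 (d 1))]
  · simp [coeff_linearSubst]
    ring
  · rintro ⟨p, q⟩ hpq hne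
    rw [Finset.HasAntidiagonal.mem_antidiagonal] at hpq
    have h0 : p 0 + q 0 = d 0 := by rw [← Finsupp.add_apply, hpq]
    have h1 : p 1 + q 1 = d 1 := by rw [← Finsupp.add_apply, hpq]
    rw [coeff_linearSubst, coeff_linearSubst]
    by_cases hp : p 1 = 0
    · have hq : q 0 ≠ 0 := by
        intro hq
        refine hne (Prod.ext ?_ ?_) <;> ext i <;> fin_cases i <;> simp <;> omega
      simp [zero_pow hq]
    · simp [zero_pow hp]
  · intro h
    exfalso; apply h
    rw [Finset.HasAntidiagonal.mem_antidiagonal,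
      ← eq_single_zero_add_single_one_iff.mpr ⟨rfl, rfl⟩]

section Exp

variable [Algebra ℚ R]

theorem coeff_linearSubst_exp (α β : R) (d : Fin 2 →₀ ℕ) :
    MvPowerSeries.coeff d (linearSubst α β (exp R)) =
      α ^ d 0 * β ^ d 1 * algebraMap ℚ R (1 / (d 0)! * (1 / (d 1)!)) := by
  have hchoose :
      ((d 0 + d 1).choose (d 0) : ℚ) * (1 / (d 0 + d 1)!) = 1 / (d 0)! * (1 / (d 1)!) := by
    rw [Nat.cast_choose ℚ (Nat.le_add_right _ _), Nat.add_sub_cancel_left]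
    field_simp
  rw [coeff_linearSubst, coeff_exp, mul_assoc, ← map_natCast (algebraMap ℚ R), ← map_mul,
    hchoose]

theorem linearSubst_exp (α β : R) :
    linearSubst α β (exp R) = linearSubst α 0 (exp R) * linearSubst 0 β (exp R) := by
  ext d
  rw [coeff_linearSubst_mul_linearSubst, coeff_linearSubst_exp, coeff_exp, coeff_exp, map_mul]
  ring

theorem linearSubst_exp_mul_linearSubst_neg (α β : R) :
    linearSubst α β (exp R) * linearSubst (-α) (-β) (exp R) = 1 := by
  rw [← neg_one_mul α, ← neg_one_mul β, ← linearSubst_rescale, ← map_mul]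
  exact (congrArg _ exp_mul_exp_neg_eq_one).trans (map_one _)

end Exp

end LinearSubst

theorem eta_neg_natCast (n : ℕ) :
    eta (-n) = (2 ^ (n + 1) - 1) * bernoulli' (n + 1) / (n + 1) := by
  rw [eta, riemannZeta_neg_nat_eq_bernoulli',
    show 1 - -(n : ℂ) = (n + 1 : ℕ) by push_cast; ring, Complex.cpow_natCast]
  ring

theorem eta_neg_one_sub_natCast_of_odd {n : ℕ} (hn : Odd n) : eta (-1 - n) = 0 := by
  obtain ⟨k, rfl⟩ := hn
  rw [eta, show -1 - ((2 * k + 1 : ℕ) : ℂ) = -2 * (k + 1) by push_cast; ring,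
    riemannZeta_neg_two_mul_nat_add_one, mul_zero]

noncomputable def etaSeries : ℂ⟦X⟧ := mk fun n => eta (-n) / n !

theorem X_mul_etaSeries :
    X * etaSeries = rescale 2 (bernoulli'PowerSeries ℂ) - bernoulli'PowerSeries ℂ := by
  ext (_ | n)
  · rw [coeff_zero_X_mul, map_sub, coeff_rescale, pow_zero, one_mul, sub_self]
  · rw [coeff_succ_X_mul, map_sub, coeff_rescale, etaSeries, bernoulli'PowerSeries, coeff_mk,
      coeff_mk, eta_neg_natCast, Nat.factorial_succ, eq_ratCast]
    push_cast
    field_simp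

theorem etaSeries_mul_exp_add_one : etaSeries * (exp ℂ + 1) = exp ℂ := by
  have hB := bernoulli'PowerSeries_mul_exp_sub_one ℂ
  have hB2 : rescale 2 (bernoulli'PowerSeries ℂ) * (exp ℂ ^ 2 - 1) = 2 * X * exp ℂ ^ 2 := by
    simpa [exp_pow_eq_rescale_exp, rescale_X, map_ofNat] using congrArg (rescale (2 : ℂ)) hB
  have hne : X * (exp ℂ - 1) ≠ 0 := by
    refine mul_ne_zero X_ne_zero fun h => ?_
    simpa [coeff_exp] using congrArg (coeff 1) h
  refine mul_left_cancel₀ hne ?_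
  linear_combination (exp ℂ ^ 2 - 1) * X_mul_etaSeries + hB2 - (exp ℂ + 1) * hB

theorem coeff_derivative_etaSeries (n : ℕ) :
    coeff n (d⁄dX ℂ etaSeries) = eta (-1 - n) / n ! := by
  rw [coeff_derivative, etaSeries, coeff_mk, Nat.factorial_succ]
  push_cast
  rw [show -((n : ℂ) + 1) = -1 - n by ring]
  field_simp

theorem derivative_etaSeries_mul :
    d⁄dX ℂ etaSeries * (exp ℂ + 2 + rescale (-1) (exp ℂ)) = 1 := by
  have H := etaSeries_mul_exp_add_one
  have D := congrArg (d⁄dX ℂ) H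
  rw [Derivation.leibniz, map_add, Derivation.map_one_eq_zero, derivative_exp, smul_eq_mul,
    smul_eq_mul, add_zero] at D
  have N : exp ℂ * rescale (-1) (exp ℂ) = 1 := exp_mul_exp_neg_eq_one
  linear_combination (exp ℂ + 1) * rescale (-1) (exp ℂ) * D
    - exp ℂ * rescale (-1) (exp ℂ) * H + (1 - d⁄dX ℂ etaSeries * (exp ℂ + 2)) * N

noncomputable def coshSeries : ℂ⟦X⟧ := mk fun n => if Even n then (n ! : ℂ)⁻¹ else 0

theorem two_mul_coshSeries : 2 * coshSeries = exp ℂ + rescale (-1) (exp ℂ) := by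
  ext n
  rw [two_mul, map_add, map_add, coeff_rescale, coshSeries, coeff_mk, coeff_exp]
  rcases Nat.even_or_odd n with hn | hn
  · simp [hn, hn.neg_one_pow]
  · simp [Nat.not_even_iff_odd.mpr hn, hn.neg_one_pow]

theorem coshPS_zero_one : coshPS 0 1 = linearSubst 1 0 coshSeries := by
  ext d
  rw [coeff_linearSubst, coshSeries, coeff_mk]
  show (if d 1 = 0 ∧ Even (d 0) then _ else _) = _
  by_cases h : d 1 = 0 <;> simp [h]

theorem coshPS_one_zero : coshPS 1 0 = linearSubst 0 1 coshSeries := by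
  ext d
  rw [coeff_linearSubst, coshSeries, coeff_mk]
  show (if d 0 = 0 ∧ Even (d 1) then _ else _) = _
  by_cases h : d 0 = 0 <;> simp [h]

theorem constantCoeff_coshPS (i j : Fin 2) : MvPowerSeries.constantCoeff (coshPS i j) = 1 := by
  rw [← MvPowerSeries.coeff_zero_eq_constantCoeff_apply, MvPowerSeries.coeff_apply]
  simp [coshPS]

theorem two_mul_linearSubst_coshSeries (α β : ℂ) :
    2 * linearSubst α β coshSeries =
      linearSubst α β (exp ℂ) + linearSubst (-α) (-β) (exp ℂ) := by
  rw [← map_ofNat (linearSubst α β), ← map_mul, two_mul_coshSeries, map_add,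
    linearSubst_rescale, neg_one_mul, neg_one_mul]

noncomputable def innerCoshSeries : MvPowerSeries (Fin 2) ℂ := fun d =>
  if Even (d 0) ∧ Even (d 1) then
    eta (-1 - (d 0 : ℂ) - (d 1 : ℂ)) /
      ((Nat.factorial (d 0) : ℂ) * (Nat.factorial (d 1) : ℂ))
  else 0

theorem two_mul_innerCoshSeries :
    2 * innerCoshSeries =
      linearSubst 1 1 (d⁄dX ℂ etaSeries) + linearSubst 1 (-1) (d⁄dX ℂ etaSeries) := by
  ext d
  rw [two_mul, map_add, map_add, coeff_linearSubst, coeff_linearSubst,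
    coeff_derivative_etaSeries, MvPowerSeries.coeff_apply, innerCoshSeries,
    Nat.cast_choose ℂ (Nat.le_add_right _ _), Nat.add_sub_cancel_left]
  push_cast
  rcases Nat.even_or_odd (d 1) with h1 | h1
  · rcases Nat.even_or_odd (d 0) with h0 | h0
    · have hfac : ((d 0 + d 1)! : ℂ) ≠ 0 := by exact_mod_cast (d 0 + d 1).factorial_ne_zero
      rw [if_pos ⟨h0, h1⟩, h1.neg_one_pow, sub_sub]
      field_simp
      ring
    · rw [if_neg fun h => Nat.not_even_iff_odd.mpr h0 h.1,
        ← Nat.cast_add, eta_neg_one_sub_natCast_of_odd (h0.add_even h1)]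
      simp
  · rw [if_neg fun h => Nat.not_even_iff_odd.mpr h1 h.2, h1.neg_one_pow]
    ring

theorem linearSubst_derivative_etaSeries_mul (α β : ℂ) :
    linearSubst α β (d⁄dX ℂ etaSeries) *
      (linearSubst α β (exp ℂ) + 2 + linearSubst (-α) (-β) (exp ℂ)) = 1 := by
  have h := congrArg (linearSubst α β) derivative_etaSeries_mul
  rwa [map_mul, map_add, map_add, map_ofNat, linearSubst_rescale, map_one, neg_one_mul,
    neg_one_mul] at h

theorem innerCoshSeries_mul :
    innerCoshSeries * (2 * (coshPS 0 1 + coshPS 1 0) ^ 2) = 1 + coshPS 0 1 * coshPS 1 0 := by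
  have hx := linearSubst_exp_mul_linearSubst_neg (1 : ℂ) 0
  have hy := linearSubst_exp_mul_linearSubst_neg (0 : ℂ) 1
  have hA := two_mul_linearSubst_coshSeries 1 0
  have hB := two_mul_linearSubst_coshSeries 0 1
  have hU := linearSubst_derivative_etaSeries_mul 1 1
  have hV := linearSubst_derivative_etaSeries_mul 1 (-1)
  rw [← coshPS_zero_one] at hA
  rw [← coshPS_one_zero] at hB
  rw [neg_zero] at hx hy hA hB
  rw [neg_neg] at hV
  rw [linearSubst_exp 1 1, linearSubst_exp (-1) (-1)] at hU
  rw [linearSubst_exp 1 (-1), linearSubst_exp (-1) 1] at hV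
  set x := linearSubst 1 0 (exp ℂ)
  set x' := linearSubst (-1) 0 (exp ℂ)
  set y := linearSubst 0 1 (exp ℂ)
  set y' := linearSubst 0 (-1) (exp ℂ)
  set U := x * y + 2 + x' * y'
  set V := x * y' + 2 + x' * y
  have hUV : (x + x' + y + y') ^ 2 = U * V := by
    linear_combination (2 - y ^ 2 - y' ^ 2) * hx + (2 - x ^ 2 - x' ^ 2) * hy
  have h4 : (4 : MvPowerSeries (Fin 2) ℂ) ≠ 0 := fun h => by
    have h' := congrArg MvPowerSeries.constantCoeff h
    rw [map_ofNat, map_zero] at h'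
    norm_num at h'
  refine mul_left_cancel₀ h4 ?_
  calc 4 * (innerCoshSeries * (2 * (coshPS 0 1 + coshPS 1 0) ^ 2))
      = 2 * innerCoshSeries * (2 * coshPS 0 1 + 2 * coshPS 1 0) ^ 2 := by ring
    _ = (linearSubst 1 1 (d⁄dX ℂ etaSeries) + linearSubst 1 (-1) (d⁄dX ℂ etaSeries)) *
          (U * V) := by
      rw [two_mul_innerCoshSeries, hA, hB, ← hUV]
      ring
    _ = U + V := by linear_combination V * hU + U * hV
    _ = (x + x') * (y + y') + 4 := by ring
    _ = 4 * (1 + coshPS 0 1 * coshPS 1 0) := by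
      rw [← hA, ← hB]
      ring

/-- The inner product `⟨cosh(√x t₁), cosh(√x t₂)⟩`, whose coefficient of
`t₁^{2k} conj(t₂)^{2m}` is `η(-1-2k-2m)/((2k)!(2m)!)`, equals
`(1 + cosh t₁ cosh conj(t₂)) / (2 (cosh t₁ + cosh conj(t₂))²)` as a formal power
series in the two variables `t₁` and `conj(t₂)`. -/
theorem stmt2 : ∀ d : Fin 2 →₀ ℕ,
    (if Even (d 0) ∧ Even (d 1) then
        eta (-1 - (d 0 : ℂ) - (d 1 : ℂ)) /
          ((Nat.factorial (d 0) : ℂ) * (Nat.factorial (d 1) : ℂ))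
      else 0) =
    MvPowerSeries.coeff d
        ((1 + coshPS 0 1 * coshPS 1 0) * (2 * (coshPS 0 1 + coshPS 1 0) ^ 2)⁻¹) := by
  intro d
  have hunit : MvPowerSeries.constantCoeff (2 * (coshPS 0 1 + coshPS 1 0) ^ 2) ≠ 0 := by
    rw [map_mul, map_pow, map_add, constantCoeff_coshPS, constantCoeff_coshPS, map_ofNat]
    norm_num
  rw [← (MvPowerSeries.eq_mul_inv_iff_mul_eq hunit).mpr innerCoshSeries_mul]
  rfl
end

section
/- Define polynomials Q_k(x) by the generating function ∑_{k=0}^∞ Q_k(x) t^k = (1/(1-t)) cosh(√x · log((1+√t)/(1-√t))). Then each Q_k is a polynomial of degree k in x with rational coefficients (only integer powers of x and t appear), Q_k(0) = 1, and the leading term of Q_k is (4x)^k/(2k)!. -/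
/-- The power series `S(t) = ∑ 2 t^m/(2m+1)`, so that
`log((1+√t)/(1-√t)) = √t · S(t)`. -/
noncomputable def Sser : PowerSeries (Polynomial ℚ) :=
  PowerSeries.mk fun m => Polynomial.C (2 / (2 * (m : ℚ) + 1))

/-- The geometric series `1/(1-t)`. -/
noncomputable def geomSer : PowerSeries (Polynomial ℚ) :=
  PowerSeries.mk fun _ => (1 : Polynomial ℚ)

/-- The `n`-th term `x^n (t·S(t)²)^n / (2n)!` in the expansion of
`cosh(√x log((1+√t)/(1-√t)))`. -/
noncomputable def coshTerm (n : ℕ) : PowerSeries (Polynomial ℚ) :=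
  PowerSeries.C
      (Polynomial.C ((Nat.factorial (2 * n) : ℚ)⁻¹) * Polynomial.X ^ n) *
    (PowerSeries.X * Sser ^ 2) ^ n

/-- The polynomial `Q_k`, the coefficient of `t^k` in
`(1/(1-t)) cosh(√x log((1+√t)/(1-√t)))`.  (Terms `coshTerm n` with `n > k`
have `t`-order greater than `k`, so the truncated sum suffices.) -/
noncomputable def Qpoly (k : ℕ) : Polynomial ℚ :=
  PowerSeries.coeff k
    (geomSer * ∑ n ∈ Finset.range (k + 1), coshTerm n)

/-!
The `t`-coefficients of the `n`-th term `xⁿ (t S(t)²)ⁿ / (2n)!` are rational multiples of the single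
monomial `xⁿ`, and they vanish below `tⁿ`. Multiplying by `1/(1-t)` sums the first `k + 1` of
them, so `Q_k` only involves `x⁰, …, xᵏ`; the coefficient of `xᵏ` receives only the `tᵏ`-coefficient `2²ᵏ/(2k)!` of `(t S²)ᵏ / (2k)!`, and that of `x⁰` only the
constant term `1` of the `n = 0` term.
-/

open PowerSeries Finset

namespace PowerSeries

variable {R : Type*}

theorem coeff_mk_one_mul [Semiring R] (f : R⟦X⟧) (k : ℕ) :
    coeff k (mk 1 * f) = ∑ j ∈ range (k + 1), coeff j f := by
  rw [coeff_mul, Nat.sum_antidiagonal_eq_sum_range_succ_mk]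
  simpa using sum_range_reflect (fun j => coeff j f) (k + 1)

variable [CommSemiring R]

theorem coeff_X_mul_pow_of_lt (f : R⟦X⟧) {n j : ℕ} (h : j < n) : coeff j ((X * f) ^ n) = 0 :=
  X_pow_dvd_iff.mp (pow_dvd_pow_of_dvd (dvd_mul_right X f) n) j h

theorem coeff_X_mul_pow_self (f : R⟦X⟧) (n : ℕ) :
    coeff n ((X * f) ^ n) = constantCoeff f ^ n := by
  simpa [mul_pow] using coeff_X_pow_mul (f ^ n) n 0

end PowerSeries

noncomputable def SserRat : ℚ⟦X⟧ := mk fun m => 2 / (2 * (m : ℚ) + 1)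

theorem Sser_eq_map : Sser = PowerSeries.map Polynomial.C SserRat := by
  ext m
  simp [Sser, SserRat]

theorem constantCoeff_SserRat : constantCoeff SserRat = 2 := by
  simp [SserRat]

noncomputable def coshCoeff (n j : ℕ) : ℚ :=
  (Nat.factorial (2 * n) : ℚ)⁻¹ * coeff j ((X * SserRat ^ 2) ^ n)

theorem coeff_coshTerm (n j : ℕ) :
    coeff j (coshTerm n) = Polynomial.monomial n (coshCoeff n j) := by
  have hmap : (X * Sser ^ 2) ^ n = PowerSeries.map Polynomial.C ((X * SserRat ^ 2) ^ n) := by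
    simp [Sser_eq_map]
  rw [coshTerm, hmap, coeff_C_mul, coeff_map, coshCoeff, ← Polynomial.C_mul_X_pow_eq_monomial,
    map_mul]
  ring

theorem Qpoly_eq_sum (k : ℕ) :
    Qpoly k = ∑ j ∈ range (k + 1), ∑ n ∈ range (k + 1), Polynomial.monomial n (coshCoeff n j) := by
  rw [Qpoly, geomSer, ← Pi.one_def, coeff_mk_one_mul]
  simp only [map_sum, coeff_coshTerm]

theorem coeff_Qpoly {k m : ℕ} (hm : m ≤ k) :
    (Qpoly k).coeff m = ∑ j ∈ range (k + 1), coshCoeff m j := by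
  simp [Qpoly_eq_sum, Polynomial.finsetSum_coeff, Polynomial.coeff_monomial, hm]

theorem natDegree_Qpoly_le (k : ℕ) : (Qpoly k).natDegree ≤ k := by
  rw [Qpoly_eq_sum]
  refine Polynomial.natDegree_sum_le_of_forall_le _ _ fun j _ =>
    Polynomial.natDegree_sum_le_of_forall_le _ _ fun n hn => ?_
  exact (Polynomial.natDegree_monomial_le _).trans (Nat.lt_succ_iff.mp (mem_range.mp hn))

theorem coeff_Qpoly_self (k : ℕ) : (Qpoly k).coeff k = 4 ^ k / (Nat.factorial (2 * k) : ℚ) := by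
  have hbelow : ∀ j ∈ range k, coshCoeff k j = 0 := fun j hj => by
    rw [coshCoeff, coeff_X_mul_pow_of_lt _ (mem_range.mp hj), mul_zero]
  rw [coeff_Qpoly le_rfl, sum_range_succ, sum_eq_zero hbelow, zero_add, coshCoeff,
    coeff_X_mul_pow_self, map_pow, constantCoeff_SserRat]
  ring

theorem coeff_Qpoly_zero (k : ℕ) : (Qpoly k).coeff 0 = 1 := by
  simp [coeff_Qpoly k.zero_le, coshCoeff, coeff_one]

theorem stmt4 (k : ℕ) :
    (Qpoly k).natDegree = k ∧ (Qpoly k).eval 0 = 1 ∧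
      (Qpoly k).coeff k = 4 ^ k / (Nat.factorial (2 * k) : ℚ) := by
  have hlead_ne : (Qpoly k).coeff k ≠ 0 := by
    rw [coeff_Qpoly_self]
    positivity
  exact ⟨(natDegree_Qpoly_le k).antisymm (Polynomial.le_natDegree_of_ne_zero hlead_ne),
    (Polynomial.coeff_zero_eq_eval_zero (Qpoly k)).symm.trans (coeff_Qpoly_zero k),
    coeff_Qpoly_self k⟩
end

section
/- For complex s with Re(s) < 2, as an identity of formal power series in u: ∑_{k=0}^∞ (u^{2k}/(2k)!) η(s-2k) = η(s) + 2π^{s-1} sin(πs/2) ∫₀^∞ sin²(ux/(2π)) x^{-s}/sinh(x) dx, where on the right side each coefficient of u^{2k} (k ≥ 1) is given by the convergent integral. -/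
open MeasureTheory

/-!
Fix `k ≥ 1` and put `a = 2k + 1 - s`, so that `Re a > 1` and `s - 2k = 1 - a`. Expanding
`1 / sinh x = 2 ∑ₙ e^{-(2n+1)x}` and integrating termwise gives the Mellin transform
`∫₀^∞ x^{a-1} / sinh x dx = 2 Γ(a) (1 - 2^{-a}) ζ(a)`. The functional equation
`ζ(1 - a) = 2 (2π)^{-a} Γ(a) cos(πa/2) ζ(a)` turns this into
`η(1 - a) = -π^{-a} cos(πa/2) ∫₀^∞ x^{a-1} / sinh x dx`, and `cos(πa/2) = (-1)^k sin(πs/2)`.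
-/

open Complex hiding eta
open Set
open scoped Real

lemma hasSum_one_div_odd_cpow {a : ℂ} (ha : 1 < a.re) :
    HasSum (fun n : ℕ => 1 / ((2 * n + 1 : ℕ) : ℂ) ^ a) ((1 - 2 ^ (-a)) * riemannZeta a) := by
  set f : ℕ → ℂ := fun n => 1 / (n : ℂ) ^ a
  have hf : HasSum f (riemannZeta a) := by
    rw [zeta_eq_tsum_one_div_nat_cpow ha]
    exact (summable_one_div_nat_cpow.mpr ha).hasSum
  have heven : HasSum (fun n => f (2 * n)) (2 ^ (-a) * riemannZeta a) := by
    refine (hf.mul_left (2 ^ (-a))).congr_fun fun n => ?_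
    simp only [f]
    rw [Nat.cast_mul, natCast_mul_natCast_cpow, Nat.cast_ofNat, cpow_neg]
    field_simp
  have hodd : Summable fun n => f (2 * n + 1) :=
    hf.summable.comp_injective fun m n h => by simpa using h
  convert hodd.hasSum using 1
  linear_combination -(heven.even_add_odd hodd.hasSum).unique hf

lemma hasSum_inv_sinh {x : ℝ} (hx : 0 < x) :
    HasSum (fun n : ℕ => 2 * Real.exp (-(2 * n + 1) * x)) (Real.sinh x)⁻¹ := by
  have hq : Real.exp (-(2 * x)) < 1 := Real.exp_lt_one_iff.mpr (by linarith)
  have hsinh : Real.sinh x * (2 * Real.exp (-x)) = 1 - Real.exp (-(2 * x)) := by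
    have h1 : Real.exp x * Real.exp (-x) = 1 := by
      rw [← Real.exp_add, add_neg_cancel, Real.exp_zero]
    have h2 : Real.exp (-(2 * x)) = Real.exp (-x) ^ 2 := by rw [sq, ← Real.exp_add]; ring_nf
    rw [Real.sinh_eq]
    linear_combination h1 + h2
  rw [eq_div_of_mul_eq (by positivity) hsinh, inv_div, div_eq_mul_inv]
  refine ((hasSum_geometric_of_lt_one (Real.exp_nonneg _) hq).mul_left _).congr_fun fun n => ?_
  rw [← Real.exp_nat_mul, mul_assoc, ← Real.exp_add]
  ring_nf

lemma mellin_inv_sinh {a : ℂ} (ha : 1 < a.re) :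
    mellin (fun t : ℝ => ((Real.sinh t : ℂ))⁻¹) a =
      2 * Gamma a * ((1 - 2 ^ (-a)) * riemannZeta a) := by
  have hF : ∀ t ∈ Ioi (0 : ℝ),
      HasSum (fun n : ℕ => (2 : ℂ) * Real.exp (-(2 * n + 1) * t)) ((Real.sinh t : ℂ))⁻¹ := by
    intro t ht
    exact_mod_cast hasSum_ofReal.mpr (hasSum_inv_sinh ht)
  have h_sum : Summable fun n : ℕ => ‖(2 : ℂ)‖ / (2 * (n : ℝ) + 1) ^ a.re := by
    have := (Real.summable_one_div_nat_rpow.mpr ha).comp_injective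
      (fun m n h => by simpa using h : Function.Injective fun n : ℕ => 2 * n + 1)
    refine (this.mul_left 2).congr fun n => ?_
    simp only [one_div, Function.comp_apply, Nat.cast_add, Nat.cast_mul, Nat.cast_ofNat,
      Nat.cast_one, norm_ofNat]
    ring
  refine (hasSum_mellin (fun n => Or.inr (by positivity)) (by linarith) hF h_sum).unique ?_
  refine ((hasSum_one_div_odd_cpow ha).mul_left (2 * Gamma a)).congr_fun fun n => ?_
  push_cast
  ring

lemma eta_one_sub_eq_mellin_inv_sinh {a : ℂ} (ha : 1 < a.re) :
    eta (1 - a) = -(π : ℂ) ^ (-a) * cos (π * a / 2) *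
      mellin (fun t : ℝ => ((Real.sinh t : ℂ))⁻¹) a := by
  have hn : ∀ n : ℕ, a ≠ -n := fun n h => by
    have hre := congrArg re h
    simp only [neg_re, natCast_re] at hre
    linarith [(n.cast_nonneg : (0 : ℝ) ≤ n)]
  have h1 : a ≠ 1 := fun h => by simp [h] at ha
  have h2pi : (2 * π : ℂ) ^ (-a) = 2 ^ (-a) * (π : ℂ) ^ (-a) := by
    exact_mod_cast mul_cpow_ofReal_nonneg zero_le_two Real.pi_pos.le (-a)
  have h2 : (2 : ℂ) ^ a * 2 ^ (-a) = 1 := by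
    rw [← cpow_add _ _ two_ne_zero, add_neg_cancel, cpow_zero]
  rw [eta, sub_sub_cancel, riemannZeta_one_sub hn h1, mellin_inv_sinh ha, h2pi]
  linear_combination (-2 * (π : ℂ) ^ (-a) * Gamma a * cos (π * a / 2) * riemannZeta a) * h2

lemma cos_pi_mul_two_mul_nat_add_one_sub_div_two (s : ℂ) (k : ℕ) :
    cos (π * (2 * k + 1 - s) / 2) = (-1) ^ k * sin (π * s / 2) := by
  rw [show (π : ℂ) * (2 * k + 1 - s) / 2 = (π / 2 - π * s / 2) + k * π by ring,
    cos_antiperiodic.add_nat_mul_eq, cos_pi_div_two_sub]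

lemma eta_sub_two_mul_nat {s : ℂ} {k : ℕ} (hs : s.re < 2 * k) :
    eta (s - 2 * k) = (-1) ^ (k + 1) * (π : ℂ) ^ (s - 1) / (π : ℂ) ^ (2 * k) *
      sin (π * s / 2) * ∫ x in Ioi (0 : ℝ), (x : ℂ) ^ (2 * k) * (x : ℂ) ^ (-s) / Real.sinh x := by
  have ha : 1 < (2 * k + 1 - s).re := by
    simp only [sub_re, add_re, mul_re, re_ofNat, natCast_re, im_ofNat, natCast_im, mul_zero,
      sub_zero, one_re]
    linarith
  have hpi : (π : ℂ) ≠ 0 := ofReal_ne_zero.mpr Real.pi_ne_zero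
  have hmellin : mellin (fun t : ℝ => ((Real.sinh t : ℂ))⁻¹) (2 * k + 1 - s) =
      ∫ x in Ioi (0 : ℝ), (x : ℂ) ^ (2 * k) * (x : ℂ) ^ (-s) / Real.sinh x := by
    refine setIntegral_congr_fun measurableSet_Ioi fun x (hx : 0 < x) => ?_
    rw [smul_eq_mul, ← div_eq_mul_inv, show (2 * k + 1 - s - 1 : ℂ) = (2 * k : ℕ) + -s by
      push_cast; ring, cpow_add _ _ (ofReal_ne_zero.mpr hx.ne'), cpow_natCast]
  have hpow : (π : ℂ) ^ (-(2 * k + 1 - s)) = (π : ℂ) ^ (s - 1) / (π : ℂ) ^ (2 * k) := by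
    rw [show -(2 * k + 1 - s) = -((2 * k : ℕ) : ℂ) + (s - 1) by push_cast; ring,
      cpow_add _ _ hpi, cpow_neg, cpow_natCast, inv_mul_eq_div]
  rw [show s - 2 * k = 1 - (2 * k + 1 - s) by ring, eta_one_sub_eq_mellin_inv_sinh ha,
    cos_pi_mul_two_mul_nat_add_one_sub_div_two, hmellin, hpow]
  ring

/-- The coefficient of `u^{2k}` in `sin²(ux/(2π))` is `(-1)^{k+1} 2^{2k-1} (x/(2π))^{2k}/(2k)!`
for `k ≥ 1`, and the `k = 0` coefficient of the right-hand side is `η(s)`. -/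
theorem stmt9 (s : ℂ) (hs : s.re < 2) (k : ℕ) :
    eta (s - 2 * k) / (Nat.factorial (2 * k) : ℂ) =
      if k = 0 then eta s
      else
        2 * (Real.pi : ℂ) ^ (s - 1) * Complex.sin ((Real.pi : ℂ) * s / 2) *
          ∫ x in Set.Ioi (0 : ℝ),
            ((-1) ^ (k + 1) * 2 ^ (2 * k - 1) * ((x : ℂ) / (2 * Real.pi)) ^ (2 * k) /
                (Nat.factorial (2 * k) : ℂ)) *
              (x : ℂ) ^ (-s) / Real.sinh x := by
  rcases Nat.eq_zero_or_pos k with rfl | hk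
  · simp
  have hs' : s.re < 2 * k := by
    have : (1 : ℝ) ≤ k := by exact_mod_cast hk
    linarith
  have hpow : (2 : ℂ) ^ (2 * k) = 2 * 2 ^ (2 * k - 1) := by
    rw [← pow_succ', Nat.sub_add_cancel (by omega)]
  have hint : ∫ x in Ioi (0 : ℝ), ((-1) ^ (k + 1) * 2 ^ (2 * k - 1) *
        ((x : ℂ) / (2 * π)) ^ (2 * k) / (Nat.factorial (2 * k) : ℂ)) *
          (x : ℂ) ^ (-s) / Real.sinh x =
      (-1) ^ (k + 1) * 2 ^ (2 * k - 1) / ((2 * π) ^ (2 * k) * (Nat.factorial (2 * k) : ℂ)) *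
        ∫ x in Ioi (0 : ℝ), (x : ℂ) ^ (2 * k) * (x : ℂ) ^ (-s) / Real.sinh x := by
    rw [← integral_const_mul]
    congr 1 with x
    rw [div_pow]
    ring
  rw [if_neg hk.ne', hint, eta_sub_two_mul_nat hs', mul_pow, hpow]
  field_simp
end

section
/- The Mittag-Leffler polynomials M_n, defined by ∑_n M_n(x) t^n = ((1+t)/(1-t))^x, satisfy the derivative identity M_n'(x) = 2 ∑_{k=0}^{⌊(n-1)/2⌋} M_{n-2k-1}(x)/(2k+1) for all n ≥ 1. -/
/-!
The coefficients of `L = log((1+t)/(1-t))` do not involve `x`, so differentiating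
`x ^ j L ^ j / j!` in `x` gives `x ^ (j - 1) L ^ j / (j - 1)!`; hence term by term
`∂ₓ ((1+t)/(1-t))^x = L(t) · ((1+t)/(1-t))^x` with `L = ∑_{m odd} 2 t^m / m`.
Comparing coefficients of `t ^ n` gives `M_n' = ∑_{m odd, m ≤ n} (2 / m) M_{n - m}`.
-/

/-- The power series `log((1+t)/(1-t)) = ∑_{m odd} 2 t^m/m`. -/
noncomputable def Lser : PowerSeries (Polynomial ℚ) :=
  PowerSeries.mk fun m => if Odd m then Polynomial.C (2 / (m : ℚ)) else 0

/-- The `j`-th term `x^j log((1+t)/(1-t))^j / j!` in the expansion of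
`((1+t)/(1-t))^x = exp(x log((1+t)/(1-t)))`. -/
noncomputable def mlTerm (j : ℕ) : PowerSeries (Polynomial ℚ) :=
  PowerSeries.C (R := Polynomial ℚ)
      (Polynomial.C ((Nat.factorial j : ℚ)⁻¹) * Polynomial.X ^ j) * Lser ^ j

/-- The Mittag-Leffler polynomial `M_n`, the coefficient of `t^n` in
`((1+t)/(1-t))^x`.  (Terms `mlTerm j` with `j > n` have `t`-order greater
than `n`, so the truncated sum suffices.) -/
noncomputable def ML (n : ℕ) : Polynomial ℚ :=
  PowerSeries.coeff (R := Polynomial ℚ) n (∑ j ∈ Finset.range (n + 1), mlTerm j)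

open PowerSeries Finset
open scoped Nat

theorem Finset.sum_range_eq_sum_range_odd {M : Type*} [AddCommMonoid M] (N : ℕ) (g : ℕ → M)
    (hg : ∀ m, Even m → g m = 0) :
    ∑ m ∈ range N, g m = ∑ k ∈ range (N / 2), g (2 * k + 1) := by
  have hinj : Set.InjOn (fun k => 2 * k + 1) (range (N / 2) : Set ℕ) :=
    fun a _ b _ h => by simp only at h; omega
  rw [← sum_image hinj]
  refine (sum_subset (fun m hm => ?_) fun m hm hm' => hg m ?_).symm
  · obtain ⟨k, hk, rfl⟩ := mem_image.mp hm
    simp only [mem_range] at hk ⊢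
    omega
  · rw [Nat.even_iff]
    by_contra hodd
    exact hm' (mem_image.mpr ⟨m / 2, by simp only [mem_range] at hm ⊢; omega, by omega⟩)

noncomputable def LserRat : ℚ⟦X⟧ :=
  PowerSeries.mk fun m => if Odd m then 2 / (m : ℚ) else 0

theorem Lser_eq_map : Lser = map Polynomial.C LserRat := by
  ext m
  simp [Lser, LserRat, apply_ite Polynomial.C]

theorem coeff_Lser (m : ℕ) : coeff m Lser = if Odd m then Polynomial.C (2 / (m : ℚ)) else 0 :=
  PowerSeries.coeff_mk _ _

theorem X_dvd_LserRat : (PowerSeries.X : ℚ⟦X⟧) ∣ LserRat := by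
  rw [PowerSeries.X_dvd_iff]
  simp [LserRat]

theorem coeff_C_mul_Lser_pow (p : Polynomial ℚ) (n j : ℕ) :
    coeff n (PowerSeries.C p * Lser ^ j) = p * Polynomial.C (coeff n (LserRat ^ j)) := by
  rw [Lser_eq_map, ← map_pow, coeff_C_mul, coeff_map]

theorem coeff_mlTerm (n j : ℕ) :
    coeff n (mlTerm j) =
      Polynomial.C ((j ! : ℚ)⁻¹) * Polynomial.X ^ j * Polynomial.C (coeff n (LserRat ^ j)) :=
  coeff_C_mul_Lser_pow _ n j

theorem coeff_mlTerm_of_lt {n j : ℕ} (h : n < j) : coeff n (mlTerm j) = 0 := by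
  have hzero : coeff n (LserRat ^ j) = 0 :=
    PowerSeries.X_pow_dvd_iff.mp (pow_dvd_pow_of_dvd X_dvd_LserRat j) n h
  rw [coeff_mlTerm, hzero, map_zero, mul_zero]

theorem coeff_sum_mlTerm {n N : ℕ} (h : n < N) :
    coeff n (∑ j ∈ range N, mlTerm j) = ML n := by
  rw [ML, map_sum, map_sum]
  refine (sum_subset (range_subset_range.2 h) fun j _ hj => coeff_mlTerm_of_lt ?_).symm
  simp only [mem_range, not_lt] at hj
  omega

theorem derivative_coeff_mlTerm_zero (n : ℕ) :
    Polynomial.derivative (coeff n (mlTerm 0)) = 0 := by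
  simp [mlTerm, PowerSeries.coeff_one, apply_ite Polynomial.derivative]

theorem derivative_coeff_mlTerm_succ (n j : ℕ) :
    Polynomial.derivative (coeff n (mlTerm (j + 1))) = coeff n (mlTerm j * Lser) := by
  have hmul : mlTerm j * Lser =
      PowerSeries.C (Polynomial.C ((j ! : ℚ)⁻¹) * Polynomial.X ^ j) * Lser ^ (j + 1) := by
    rw [mlTerm, mul_assoc, ← pow_succ]
  have hfac : ((j + 1)! : ℚ)⁻¹ * ((j + 1 : ℕ) : ℚ) = (j ! : ℚ)⁻¹ := by
    rw [Nat.factorial_succ]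
    push_cast
    field_simp
  rw [coeff_mlTerm, hmul, coeff_C_mul_Lser_pow, Polynomial.derivative_mul,
    Polynomial.derivative_C, mul_zero, add_zero, Polynomial.derivative_C_mul,
    Polynomial.derivative_X_pow, Nat.add_sub_cancel, ← mul_assoc, ← Polynomial.C_mul, hfac]

theorem derivative_ML (n : ℕ) :
    Polynomial.derivative (ML n) = coeff n (Lser * ∑ j ∈ range n, mlTerm j) := by
  rw [ML, map_sum, Polynomial.derivative_sum, sum_range_succ', derivative_coeff_mlTerm_zero,
    add_zero, mul_sum, map_sum]
  exact sum_congr rfl fun j _ => by rw [derivative_coeff_mlTerm_succ, mul_comm]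

/-- Derivative identity for Mittag-Leffler polynomials:
`M_n'(x) = 2 ∑_{k=0}^{⌊(n-1)/2⌋} M_{n-2k-1}(x)/(2k+1)` for `n ≥ 1`. -/
theorem stmt11 (n : ℕ) (hn : 1 ≤ n) :
    Polynomial.derivative (ML n) =
      ∑ k ∈ Finset.range ((n - 1) / 2 + 1),
        (2 / (2 * (k : ℚ) + 1)) • ML (n - (2 * k + 1)) := by
  have hcard : (n - 1) / 2 + 1 = (n + 1) / 2 := by omega
  rw [derivative_ML, coeff_mul, Nat.sum_antidiagonal_eq_sum_range_succ_mk,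
    sum_range_eq_sum_range_odd _ _ fun m hm => by
      rw [coeff_Lser, if_neg (Nat.not_odd_iff_even.mpr hm), zero_mul], ← hcard]
  refine sum_congr rfl fun k hk => ?_
  have hlt : n - (2 * k + 1) < n := by simp only [mem_range] at hk; omega
  rw [coeff_Lser, if_pos (odd_two_mul_add_one k), coeff_sum_mlTerm hlt, Polynomial.smul_eq_C_mul]
  push_cast
  rfl
end

section
/- For complex s with -1 < Re(s) < 0, ∫₀^∞ v^{s-1} tanh(v) dv = -(4Γ(s)/2^{s+1}) η(s). -/
/-!
Write `tanh = g + 1_{(1, ∞)}`. The function `g = tanhSubStep` is `O(t)` at `0` and `O(e^{-2t})`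
at `∞`, so its Mellin transform `M g` is holomorphic on `-1 < re s`, and for `-1 < re s < 0` the
integral equals `M g (s) - 1/s`. For `1 < re s` instead `M g (s) = 1/s - M[1 - tanh](s)`, and
expanding `1 - tanh t = 2 ∑ (-1)^n e^{-2(n+1)t}` termwise gives
`M[1 - tanh](s) = 2^{1-s} Γ(s) η(s)`. Hence `s M g (s) - 1 = -2^{1-s} Γ(s+1) η(s)` for `1 < re s`,
and by analytic continuation for all `-1 < re s`, once `η` is replaced by its entire continuation
`-cosZeta (1/2)`. Dividing by `s` and using `4 / 2^{s+1} = 2^{1-s}` gives the formula.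
-/

open MeasureTheory

open Set Filter Asymptotics Topology HurwitzZeta

namespace Real

lemma continuous_tanh : Continuous tanh := by
  simp_rw [funext tanh_eq_sinh_div_cosh]
  exact continuous_sinh.div continuous_cosh fun x => (cosh_pos x).ne'

lemma tanh_isBigO_id : (tanh ·) =O[𝓝 0] (·) := by
  have h := ((hasDerivAt_sinh 0).div (hasDerivAt_cosh 0) (cosh_pos 0).ne').isBigO_sub
  simpa [← tanh_eq_sinh_div_cosh] using h

lemma one_sub_tanh_eq (x : ℝ) : 1 - tanh x = 2 * exp (-2 * x) / (1 + exp (-2 * x)) := by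
  have hx : exp x * exp (-x) = 1 := by rw [← exp_add, add_neg_cancel, exp_zero]
  have h2x : exp (-2 * x) = exp (-x) * exp (-x) := by rw [← exp_add]; ring_nf
  rw [tanh_eq_sinh_div_cosh, cosh_eq, sinh_eq, h2x]
  field_simp
  linear_combination (-2 * exp (-x)) * hx

lemma abs_one_sub_tanh_le (x : ℝ) : |1 - tanh x| ≤ 2 * exp (-2 * x) := by
  rw [one_sub_tanh_eq, abs_of_nonneg (by positivity)]
  exact div_le_self (by positivity) (le_add_of_nonneg_right (exp_pos _).le)

lemma hasSum_one_sub_tanh {t : ℝ} (ht : 0 < t) :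
    HasSum (fun n : ℕ => 2 * (-1) ^ n * exp (-(2 * (n + 1)) * t)) (1 - tanh t) := by
  have hr : ‖-exp (-2 * t)‖ < 1 := by
    rw [norm_neg, norm_of_nonneg (exp_pos _).le, exp_lt_one_iff]
    linarith
  have h := (hasSum_geometric_of_norm_lt_one hr).mul_left (2 * exp (-2 * t))
  rw [sub_neg_eq_add, ← div_eq_mul_inv, ← one_sub_tanh_eq] at h
  refine h.congr_fun fun n => ?_
  rw [neg_pow (exp _), ← exp_nat_mul, mul_mul_mul_comm, ← exp_add]
  ring_nf

end Real

lemma hasSum_alternating_zeta {s : ℂ} (hs : 1 < s.re) :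
    HasSum (fun n : ℕ => (-1) ^ n / (n : ℂ) ^ s) (-eta s) := by
  set f : ℕ → ℂ := fun n => 1 / (n : ℂ) ^ s
  have hf : HasSum f (riemannZeta s) := (LSeriesHasSum_one hs).congr_fun fun n =>
    (LSeries.term_of_ne_zero' (Complex.ne_zero_of_one_lt_re hs) 1 n).symm
  have heven : HasSum (fun k => f (2 * k)) (2 ^ (-s) * riemannZeta s) := by
    refine (hf.mul_left _).congr_fun fun k => ?_
    simp only [f, Nat.cast_mul, Nat.cast_ofNat, Complex.cpow_neg]
    rw [show (2 : ℂ) = ((2 : ℕ) : ℂ) by norm_num, Complex.natCast_mul_natCast_cpow]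
    field_simp
  have hodd : HasSum (fun k => f (2 * k + 1)) (riemannZeta s - 2 ^ (-s) * riemannZeta s) := by
    have hsum : Summable fun k => f (2 * k + 1) :=
      hf.summable.comp_injective fun a b h => by omega
    convert hsum.hasSum using 1
    linear_combination hf.unique (heven.even_add_odd hsum.hasSum)
  have h := HasSum.even_add_odd (f := fun n : ℕ => (-1) ^ n / (n : ℂ) ^ s)
    (heven.congr_fun fun k => by simp [f, pow_mul])
    (hodd.neg.congr_fun fun k => by simp [f, pow_succ, pow_mul, neg_div])
  rw [eta, show (1 : ℂ) - s = 1 + -s by ring, Complex.cpow_add _ _ two_ne_zero, Complex.cpow_one]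
  convert h using 1
  ring

lemma hasSum_eta {s : ℂ} (hs : 1 < s.re) :
    HasSum (fun n : ℕ => (-1) ^ n / ((n : ℂ) + 1) ^ s) (eta s) := by
  have h := (hasSum_nat_add_iff' 1).mpr (hasSum_alternating_zeta hs)
  simp only [Finset.range_one, Finset.sum_singleton, Nat.cast_zero,
    Complex.zero_cpow (Complex.ne_zero_of_one_lt_re hs), div_zero, sub_zero] at h
  rw [← neg_neg (eta s)]
  refine h.neg.congr_fun fun n => ?_
  push_cast
  ring

lemma hasSum_cosZeta_one_half {s : ℂ} (hs : 1 < s.re) :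
    HasSum (fun n : ℕ => (-1) ^ n / (n : ℂ) ^ s) (cosZeta (1 / 2 : ℝ) s) := by
  refine (hasSum_nat_cosZeta (1 / 2) hs).congr_fun fun n => ?_
  rw [show 2 * Real.pi * (1 / 2) * n = n * Real.pi by ring, Real.cos_nat_mul_pi]
  push_cast
  rfl

lemma unitAddCircle_one_half_ne_zero : ((1 / 2 : ℝ) : UnitAddCircle) ≠ 0 := by
  rw [Ne, AddCircle.coe_eq_zero_iff]
  rintro ⟨n, hn⟩
  have h : (2 * n : ℝ) = ((1 : ℤ) : ℝ) := by
    rw [zsmul_eq_mul, mul_one] at hn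
    rw [hn]
    norm_num
  norm_cast at h
  omega

lemma eqOn_of_eqOn_one_lt_re {f g : ℂ → ℂ} {U : Set ℂ} (hU : IsOpen U) (hUc : IsPreconnected U)
    (hU₁ : {s : ℂ | 1 < s.re} ⊆ U) (hf : DifferentiableOn ℂ f U) (hg : DifferentiableOn ℂ g U)
    (hfg : EqOn f g {s : ℂ | 1 < s.re}) : EqOn f g U := by
  have hopen : IsOpen {s : ℂ | 1 < s.re} := isOpen_lt continuous_const Complex.continuous_re
  have h2 : (2 : ℂ) ∈ {s : ℂ | 1 < s.re} := by norm_num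
  exact (hf.analyticOnNhd hU).eqOn_of_preconnected_of_eventuallyEq (hg.analyticOnNhd hU) hUc
    (hU₁ h2) (eventually_of_mem (hopen.mem_nhds h2) hfg)

lemma differentiableAt_eta {s : ℂ} (hs : s ≠ 1) : DifferentiableAt ℂ eta s :=
  ((differentiableAt_const 1).sub ((differentiableAt_const 1).sub differentiableAt_id
    |>.const_cpow (Or.inl two_ne_zero))).mul (differentiableAt_riemannZeta hs)

lemma eta_eq_neg_cosZeta {s : ℂ} (hs : s ≠ 1) : eta s = -cosZeta (1 / 2 : ℝ) s := by
  refine eqOn_of_eqOn_one_lt_re (f := eta) (g := fun s => -cosZeta (1 / 2 : ℝ) s)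
    isOpen_compl_singleton
    (isConnected_compl_singleton_of_one_lt_rank (by simp) 1).isPreconnected
    (fun s (hs : 1 < s.re) (h : s = 1) => by simp [h] at hs)
    (fun s hs => (differentiableAt_eta hs).differentiableWithinAt)
    (differentiable_cosZeta_of_ne_zero unitAddCircle_one_half_ne_zero).neg.differentiableOn
    (fun s hs => neg_eq_iff_eq_neg.mp <|
      (hasSum_alternating_zeta hs).unique (hasSum_cosZeta_one_half hs)) hs

lemma one_sub_tanh_isBigO_atTop :
    (fun t => 1 - (Real.tanh t : ℂ)) =O[atTop] fun t => Real.exp (-2 * t) := by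
  refine isBigO_of_le' (c := 2) _ fun t => ?_
  rw [← Complex.ofReal_one, ← Complex.ofReal_sub, Complex.norm_real, Real.norm_eq_abs,
    Real.norm_of_nonneg (Real.exp_pos _).le]
  exact Real.abs_one_sub_tanh_le t

lemma mellinConvergent_one_sub_tanh {s : ℂ} (hs : 0 < s.re) :
    MellinConvergent (fun t => 1 - (Real.tanh t : ℂ)) s := by
  have hc : Continuous fun t => 1 - (Real.tanh t : ℂ) :=
    continuous_const.sub (Complex.continuous_ofReal.comp Real.continuous_tanh)
  refine mellinConvergent_of_isBigO_rpow_exp (b := 0) two_pos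
    (hc.locallyIntegrable.locallyIntegrableOn _) one_sub_tanh_isBigO_atTop ?_ hs
  simpa only [neg_zero, Real.rpow_zero] using hc.continuousWithinAt.tendsto.isBigO_one ℝ

lemma mellin_one_sub_tanh {s : ℂ} (hs : 1 < s.re) :
    mellin (fun t => 1 - (Real.tanh t : ℂ)) s = 2 ^ (1 - s) * Complex.Gamma s * eta s := by
  have hsum : Summable fun n : ℕ => ‖(2 * (-1) ^ n : ℂ)‖ / (2 * ((n : ℝ) + 1)) ^ s.re := by
    refine ((Real.summable_one_div_nat_add_rpow 1 s.re).mpr hs).mul_left (2 / 2 ^ s.re)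
      |>.congr fun n => ?_
    rw [abs_of_pos (by positivity), Real.mul_rpow zero_le_two (by positivity), norm_mul, norm_pow,
      norm_neg, norm_one, one_pow, mul_one, Complex.norm_ofNat, div_mul_div_comm, mul_one]
  have h := hasSum_mellin (F := fun t => 1 - (Real.tanh t : ℂ))
    (p := fun n : ℕ => 2 * ((n : ℝ) + 1)) (fun n => Or.inr (by positivity)) (by linarith)
    (fun t ht => by exact_mod_cast Real.hasSum_one_sub_tanh ht) hsum
  refine h.unique <|
    (hasSum_eta hs).mul_left (2 ^ (1 - s) * Complex.Gamma s) |>.congr_fun fun n => ?_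
  rw [Complex.ofReal_mul, Complex.mul_cpow_ofReal_nonneg zero_le_two (by positivity),
    Complex.cpow_sub _ _ two_ne_zero, Complex.cpow_one]
  push_cast
  ring

lemma hasMellin_one_Ioi {s : ℂ} (hs : s.re < 0) :
    HasMellin ((Ioi 1).indicator fun _ => 1 : ℝ → ℂ) s (-1 / s) := by
  have hs' : (s - 1).re < -1 := by rw [Complex.sub_re, Complex.one_re]; linarith
  simp_rw [HasMellin, mellin, MellinConvergent, ← indicator_smul, IntegrableOn,
    integrable_indicator_iff measurableSet_Ioi, IntegrableOn, smul_eq_mul,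
    integral_indicator measurableSet_Ioi, mul_one,
    Measure.restrict_restrict_of_subset (Ioi_subset_Ioi zero_le_one)]
  refine ⟨integrableOn_Ioi_cpow_of_lt hs' one_pos, ?_⟩
  rw [integral_Ioi_cpow_of_lt hs' one_pos]
  simp

noncomputable def tanhSubStep (t : ℝ) : ℂ := Real.tanh t - (Ioi 1).indicator (fun _ => 1) t

lemma tanhSubStep_isBigO_atTop : tanhSubStep =O[atTop] fun t => Real.exp (-2 * t) := by
  refine EventuallyEq.trans_isBigO ?_ one_sub_tanh_isBigO_atTop.neg_left
  filter_upwards [eventually_gt_atTop 1] with t ht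
  simp [tanhSubStep, indicator_of_mem (mem_Ioi.mpr ht)]

lemma tanhSubStep_isBigO_nhdsGT_zero : tanhSubStep =O[𝓝[>] 0] (· ^ (-(-1 : ℝ))) := by
  have h : tanhSubStep =ᶠ[𝓝[>] 0] fun t => (Real.tanh t : ℂ) := by
    filter_upwards [Ioo_mem_nhdsGT one_pos] with t ht
    simp [tanhSubStep, indicator_of_notMem (notMem_Ioi.mpr ht.2.le)]
  simp only [neg_neg, Real.rpow_one]
  exact h.trans_isBigO
    (Complex.isBigO_ofReal_left.mpr (Real.tanh_isBigO_id.mono nhdsWithin_le_nhds))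

lemma locallyIntegrableOn_tanhSubStep : LocallyIntegrableOn tanhSubStep (Ioi 0) :=
  ((Complex.continuous_ofReal.comp Real.continuous_tanh).locallyIntegrable.sub
    ((locallyIntegrable_const 1).indicator measurableSet_Ioi)).locallyIntegrableOn _

lemma mellinConvergent_tanhSubStep {s : ℂ} (hs : -1 < s.re) : MellinConvergent tanhSubStep s :=
  mellinConvergent_of_isBigO_rpow_exp two_pos locallyIntegrableOn_tanhSubStep
    tanhSubStep_isBigO_atTop tanhSubStep_isBigO_nhdsGT_zero hs

lemma differentiableAt_mellin_tanhSubStep {s : ℂ} (hs : -1 < s.re) :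
    DifferentiableAt ℂ (mellin tanhSubStep) s :=
  mellin_differentiableAt_of_isBigO_rpow_exp two_pos locallyIntegrableOn_tanhSubStep
    tanhSubStep_isBigO_atTop tanhSubStep_isBigO_nhdsGT_zero hs

lemma mellin_tanhSubStep_of_pos {s : ℂ} (hs : 0 < s.re) :
    mellin tanhSubStep s = 1 / s - mellin (fun t => 1 - (Real.tanh t : ℂ)) s := by
  rw [← (hasMellin_one_Ioc hs).2,
    ← (hasMellin_sub (hasMellin_one_Ioc hs).1 (mellinConvergent_one_sub_tanh hs)).2, mellin, mellin]
  refine setIntegral_congr_fun measurableSet_Ioi fun t (ht : 0 < t) => ?_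
  congr 1
  rcases le_or_gt t 1 with h1 | h1
  · simp [tanhSubStep, indicator_of_mem (mem_Ioc.mpr ⟨ht, h1⟩),
      indicator_of_notMem (notMem_Ioi.mpr h1)]
  · simp [tanhSubStep, indicator_of_mem (mem_Ioi.mpr h1),
      indicator_of_notMem fun h : t ∈ Ioc 0 1 => h1.not_ge h.2]

lemma mellin_tanh_eq {s : ℂ} (hs₁ : -1 < s.re) (hs₂ : s.re < 0) :
    mellin (fun t => (Real.tanh t : ℂ)) s = mellin tanhSubStep s - 1 / s := by
  have h := (hasMellin_add (mellinConvergent_tanhSubStep hs₁) (hasMellin_one_Ioi hs₂).1).2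
  rw [(hasMellin_one_Ioi hs₂).2] at h
  simp only [tanhSubStep, sub_add_cancel] at h
  rw [h, neg_div, ← sub_eq_add_neg]

lemma differentiableAt_Gamma_add_one {s : ℂ} (hs : -1 < s.re) :
    DifferentiableAt ℂ (fun s => Complex.Gamma (s + 1)) s := by
  refine (Complex.differentiableAt_Gamma _ fun m hm => ?_).comp s (differentiableAt_id.add_const 1)
  have h := congrArg Complex.re hm
  simp only [Complex.add_re, Complex.one_re, Complex.neg_re, Complex.natCast_re] at h
  linarith [(m.cast_nonneg : (0 : ℝ) ≤ m)]

lemma mul_mellin_tanhSubStep_sub_one {s : ℂ} (hs : -1 < s.re) :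
    s * mellin tanhSubStep s - 1 = 2 ^ (1 - s) * Complex.Gamma (s + 1) * cosZeta (1 / 2 : ℝ) s := by
  refine eqOn_of_eqOn_one_lt_re (f := fun s => s * mellin tanhSubStep s - 1)
    (g := fun s => 2 ^ (1 - s) * Complex.Gamma (s + 1) * cosZeta (1 / 2 : ℝ) s)
    (U := {s | -1 < s.re}) (isOpen_lt continuous_const Complex.continuous_re)
    (convex_halfSpace_re_gt (-1)).isPreconnected
    (fun s (hs : 1 < s.re) => show -1 < s.re by linarith)
    (fun s hs => ?_) (fun s hs => ?_) (fun s (hs : 1 < s.re) => ?_) hs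
  · exact (differentiableAt_id.mul (differentiableAt_mellin_tanhSubStep hs)).sub_const 1
      |>.differentiableWithinAt
  · exact ((((differentiableAt_const 1).sub differentiableAt_id).const_cpow
      (Or.inl two_ne_zero)).mul (differentiableAt_Gamma_add_one hs)).mul
      (differentiable_cosZeta_of_ne_zero unitAddCircle_one_half_ne_zero s) |>.differentiableWithinAt
  · have hs0 : s ≠ 0 := Complex.ne_zero_of_one_lt_re hs
    have hs1 : s ≠ 1 := by rintro rfl; simp at hs
    dsimp only
    rw [mellin_tanhSubStep_of_pos (by linarith), mellin_one_sub_tanh hs, eta_eq_neg_cosZeta hs1,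
      Complex.Gamma_add_one s hs0]
    field_simp
    ring

theorem stmt14 (s : ℂ) (hs₁ : -1 < s.re) (hs₂ : s.re < 0) :
    (∫ v in Set.Ioi (0 : ℝ), (v : ℂ) ^ (s - 1) * Real.tanh v) =
      -(4 * Complex.Gamma s / 2 ^ (s + 1)) * eta s := by
  have hs0 : s ≠ 0 := by rintro rfl; simp at hs₂
  have hs1 : s ≠ 1 := by rintro rfl; norm_num at hs₂
  have h := mul_mellin_tanhSubStep_sub_one hs₁
  rw [Complex.Gamma_add_one s hs0] at h
  have h4 : (4 : ℂ) / 2 ^ (s + 1) = 2 ^ (1 - s) := by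
    rw [div_eq_iff (by simp), ← Complex.cpow_add _ _ two_ne_zero,
      show 1 - s + (s + 1) = (2 : ℕ) by push_cast; ring, Complex.cpow_natCast]
    norm_num
  calc (∫ v in Set.Ioi (0 : ℝ), (v : ℂ) ^ (s - 1) * Real.tanh v)
      = mellin (fun t => (Real.tanh t : ℂ)) s := rfl
    _ = (s * mellin tanhSubStep s - 1) / s := by rw [mellin_tanh_eq hs₁ hs₂]; field_simp
    _ = -(4 * Complex.Gamma s / 2 ^ (s + 1)) * eta s := by
      rw [h, eta_eq_neg_cosZeta hs1, mul_div_right_comm (4 : ℂ), h4]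
      field_simp
end
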